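/- arXiv:2303.13877 — 4 statements merged into one kernel-verified Lean document; each statement's English description precedes it below -/
import Mathlib

section
/- Let G be a finite group and let Sym²(ℂ[G]) be the second symmetric power of the group algebra, with G × G acting via (g,h)·x = g x h⁻¹ diagonally on both factors, and ℤ₂ acting by inverting group elements. Then the ℤ₂-invariant part of the (G × G)-coinvariants of Sym²(ℂ[G]) is ℂ-linearly isomorphic to the ℤ₂-coinvariants of ℂ[Ĝ], where Ĝ is the set of conjugacy classes of G and ℤ₂ acts on Ĝ by [x] ↦ [x⁻¹]. -/
/- `Sym²(ℂ[G])` is modelled (in characteristic zero) as the space of symmetric functions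
`G × G → ℂ` (with `G` the basis of `ℂ[G]`).  `(g,h) ∈ G × G` acts on the basis by
`x ↦ g x h⁻¹`, the `ℤ₂`-involution inverts group elements.  The `(G × G)`-coinvariants are
the quotient by the submodule generated by all `f − (g,h)·f`; the involution descends to
this quotient, and we take the invariant part of the induced involution.  `ℂ[Ĝ]` is
modelled as the space of class functions `G → ℂ`, with `ℤ₂` acting by inversion, and its
`ℤ₂`-coinvariants are the quotient by the image of `id − involution`. -/

noncomputable section

variable (G : Type*) [Group G]

/-- `Sym²ℂ[G]`: symmetric functions on `G × G`. -/
def symTwo : Submodule ℂ (G × G → ℂ) :=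
  LinearMap.ker (LinearMap.funLeft ℂ ℂ (Prod.swap : G × G → G × G) - LinearMap.id)

variable {G}

/-- The action of `(g,h) ∈ G × G` on `Sym²ℂ[G]` (on the ambient space), induced by
`x ↦ g x h⁻¹` on the basis. -/
def actS (g h : G) : (G × G → ℂ) →ₗ[ℂ] (G × G → ℂ) :=
  LinearMap.funLeft ℂ ℂ (fun p : G × G => (g⁻¹ * p.1 * h, g⁻¹ * p.2 * h))

variable (G)

/-- The `ℤ₂`-involution on functions `G × G → ℂ`, inverting group elements. -/
def sigmaTwo : (G × G → ℂ) →ₗ[ℂ] (G × G → ℂ) :=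
  LinearMap.funLeft ℂ ℂ (fun p : G × G => (p.1⁻¹, p.2⁻¹))

/-- The submodule of relations defining the `(G × G)`-coinvariants of `Sym²ℂ[G]`. -/
def relN : Submodule ℂ (G × G → ℂ) :=
  Submodule.span ℂ {y | ∃ (g h : G) (f : G × G → ℂ), f ∈ symTwo G ∧ y = f - actS g h f}

/-- The relations, as a submodule of `Sym²ℂ[G]`. -/
def relNS : Submodule ℂ (symTwo G) := (relN G).comap (symTwo G).subtype

lemma sigmaTwo_mem_symTwo : ∀ f ∈ symTwo G, sigmaTwo G f ∈ symTwo G := by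
  intro f hf
  simp only [symTwo, LinearMap.mem_ker, LinearMap.sub_apply, LinearMap.id_apply,
    sub_eq_zero] at hf ⊢
  have h2 := fun p => congrFun hf p
  funext p
  simpa [sigmaTwo, LinearMap.funLeft_apply] using h2 (p.1⁻¹, p.2⁻¹)

/-- The involution restricted to `Sym²ℂ[G]`. -/
def sigmaS : symTwo G →ₗ[ℂ] symTwo G :=
  (sigmaTwo G).restrict (sigmaTwo_mem_symTwo G)

lemma relN_map_le : (relN G).map (sigmaTwo G) ≤ relN G := by
  rw [relN, Submodule.map_span, Submodule.span_le]
  rintro _ ⟨y, ⟨g, h, f, hf, rfl⟩, rfl⟩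
  refine Submodule.subset_span ⟨h, g, sigmaTwo G f, sigmaTwo_mem_symTwo G f hf, ?_⟩
  rw [map_sub]
  congr 1
  funext p
  simp [sigmaTwo, actS, LinearMap.funLeft_apply, mul_inv_rev, inv_inv, mul_assoc]

lemma relNS_le_comap : relNS G ≤ (relNS G).comap (sigmaS G) := by
  intro x hx
  have : sigmaTwo G (x : G × G → ℂ) ∈ relN G := relN_map_le G ⟨(x : G × G → ℂ), hx, rfl⟩
  simpa [relNS, Submodule.mem_comap, sigmaS, LinearMap.restrict_coe_apply] using this

/-- The induced involution on the `(G × G)`-coinvariants of `Sym²ℂ[G]`. -/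
def sigmaQ : (symTwo G ⧸ relNS G) →ₗ[ℂ] (symTwo G ⧸ relNS G) :=
  Submodule.mapQ (relNS G) (relNS G) (sigmaS G) (relNS_le_comap G)

/-- The space of class functions `G → ℂ`, a model of `ℂ[Ĝ]`. -/
def classFun : Submodule ℂ (G → ℂ) :=
  ⨅ h : G, LinearMap.ker
    (LinearMap.funLeft ℂ ℂ (fun g : G => h * g * h⁻¹) - LinearMap.id)

lemma mem_classFun {f : G → ℂ} :
    f ∈ classFun G ↔ ∀ h g : G, f (h * g * h⁻¹) = f g := by
  simp [classFun, Submodule.mem_iInf, LinearMap.mem_ker, sub_eq_zero, funext_iff]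

/-- The involution of the space of class functions induced by inversion on `G`. -/
def classFunInv : classFun G →ₗ[ℂ] classFun G :=
  (LinearMap.funLeft ℂ ℂ (fun g : G => g⁻¹)).restrict
    (p := classFun G) (q := classFun G)
    (fun f hf => by
      rw [mem_classFun] at hf ⊢
      intro h g
      have := hf h g⁻¹
      simpa [mul_inv_rev, mul_assoc] using this)

end

/-! The comparison map sends a function `f` on pairs to the class function
`x ↦ ∑_{a,h} f (a x a⁻¹ h, h)`: it pushes `f` forward along `(u, v) ↦ u v⁻¹` and sums over
conjugates, which is the dual of `ρ(g·h) = [g h⁻¹]`, and it kills the relations. In the other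
direction a class function `φ` is pulled back along `(u, v) ↦ u v⁻¹` and symmetrized; this kills
`φ - φ ∘ inv` and lands in the `σ`-fixed symmetric functions. The composites are
`|G|² (1 + inversion)` on class functions and `2 ∑_{g,k} (g,k)·f` on symmetric functions, and
the latter is `2 |G|² f` modulo the relations. So the two maps induce inverse isomorphisms between
the full `(G × G)`-coinvariants and the `ℤ₂`-coinvariants of class functions, and since every
coinvariant class is represented by a `σ`-fixed function, `σ` acts trivially on the
coinvariants. -/

open Finset

section

variable {G : Type*}

lemma mem_symTwo {f : G × G → ℂ} : f ∈ symTwo G ↔ ∀ u v, f (u, v) = f (v, u) := by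
  simp only [symTwo, LinearMap.mem_ker, LinearMap.sub_apply, LinearMap.id_apply, sub_eq_zero,
    funext_iff, LinearMap.funLeft_apply, Prod.forall, Prod.swap_prod_mk]
  exact ⟨fun h u v => (h u v).symm, fun h u v => (h u v).symm⟩

variable [Group G]

variable (G) in
def pullDiv : (G → ℂ) →ₗ[ℂ] (G × G → ℂ) :=
  LinearMap.funLeft ℂ ℂ (fun p : G × G => p.1 * p.2⁻¹) +
    LinearMap.funLeft ℂ ℂ (fun p : G × G => p.2 * p.1⁻¹)

lemma pullDiv_apply (φ : G → ℂ) (u v : G) :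
    pullDiv G φ (u, v) = φ (u * v⁻¹) + φ (v * u⁻¹) := rfl

lemma pullDiv_mem_symTwo (φ : G → ℂ) : pullDiv G φ ∈ symTwo G :=
  mem_symTwo.2 fun _ _ => add_comm _ _

lemma pullDiv_comp_inv (φ : G → ℂ) :
    pullDiv G (LinearMap.funLeft ℂ ℂ (fun g : G => g⁻¹) φ) = pullDiv G φ := by
  funext ⟨u, v⟩
  simp only [pullDiv_apply, LinearMap.funLeft_apply, mul_inv_rev, inv_inv]
  exact add_comm _ _

lemma sigmaTwo_pullDiv {φ : G → ℂ} (hφ : φ ∈ classFun G) :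
    sigmaTwo G (pullDiv G φ) = pullDiv G φ := by
  rw [mem_classFun] at hφ
  funext ⟨u, v⟩
  simp only [sigmaTwo, LinearMap.funLeft_apply, pullDiv_apply, inv_inv]
  rw [← hφ u (u⁻¹ * v), ← hφ v (v⁻¹ * u), add_comm]
  group

variable [Fintype G]

variable (G) in
def pushDiv : (G × G → ℂ) →ₗ[ℂ] (G → ℂ) :=
  ∑ a : G, ∑ h : G, LinearMap.funLeft ℂ ℂ (fun x : G => (a * x * a⁻¹ * h, h))

lemma pushDiv_apply (f : G × G → ℂ) (x : G) :
    pushDiv G f x = ∑ a : G, ∑ h : G, f (a * x * a⁻¹ * h, h) := by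
  simp [pushDiv, LinearMap.coe_sum, Finset.sum_apply, LinearMap.funLeft_apply]

lemma pushDiv_mem_classFun (f : G × G → ℂ) : pushDiv G f ∈ classFun G := by
  rw [mem_classFun]
  intro b x
  simp only [pushDiv_apply]
  refine Fintype.sum_equiv (Equiv.mulRight b) _ _ fun a => sum_congr rfl fun h _ => ?_
  simp only [Equiv.coe_mulRight]
  congr 2
  group

lemma pushDiv_actS (g k : G) (f : G × G → ℂ) : pushDiv G (actS g k f) = pushDiv G f := by
  funext x
  simp only [pushDiv_apply, ← Fintype.sum_prod_type']
  refine Fintype.sum_equiv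
    ((Equiv.mulLeft g⁻¹).prodCongr ((Equiv.mulLeft g⁻¹).trans (Equiv.mulRight k))) _ _
    fun p => ?_
  simp only [Equiv.prodCongr_apply, Equiv.coe_mulLeft, Equiv.coe_mulRight, Equiv.trans_apply,
    Prod.map_fst, Prod.map_snd, actS, LinearMap.funLeft_apply]
  congr 2
  group

lemma relN_le_ker_pushDiv : relN G ≤ LinearMap.ker (pushDiv G) := by
  rw [relN, Submodule.span_le]
  rintro _ ⟨g, h, f, -, rfl⟩
  simp [map_sub, pushDiv_actS]

lemma pushDiv_pullDiv {φ : G → ℂ} (hφ : φ ∈ classFun G) :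
    pushDiv G (pullDiv G φ) =
      (Fintype.card G : ℂ) ^ 2 • (φ + LinearMap.funLeft ℂ ℂ (fun g : G => g⁻¹) φ) := by
  rw [mem_classFun] at hφ
  have hconst (x a h : G) : pullDiv G φ (a * x * a⁻¹ * h, h) = φ x + φ x⁻¹ := by
    rw [pullDiv_apply, ← hφ a x, ← hφ a x⁻¹]
    congr 2 <;> group
  funext x
  simp only [pushDiv_apply, hconst, sum_const, card_univ, nsmul_eq_mul, Pi.smul_apply,
    Pi.add_apply, LinearMap.funLeft_apply, smul_eq_mul]
  ring

lemma sum_actS_eq_pushDiv (f : G × G → ℂ) (x y : G) :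
    ∑ p : G × G, actS p.1 p.2 f (x, y) = pushDiv G f (x * y⁻¹) := by
  rw [pushDiv_apply, ← Fintype.sum_prod_type']
  refine (Fintype.sum_equiv ((Equiv.inv G).prodShear fun a => Equiv.mulLeft (y⁻¹ * a⁻¹)) _ _
    fun p => ?_).symm
  simp only [Equiv.prodShear_apply, Equiv.inv_apply, Equiv.coe_mulLeft, actS,
    LinearMap.funLeft_apply]
  congr 2 <;> group

lemma pullDiv_pushDiv {f : G × G → ℂ} (hf : f ∈ symTwo G) :
    pullDiv G (pushDiv G f) = (2 : ℂ) • ∑ p : G × G, actS p.1 p.2 f := by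
  funext ⟨x, y⟩
  have hswap : ∑ p : G × G, actS p.1 p.2 f (y, x) = ∑ p : G × G, actS p.1 p.2 f (x, y) :=
    sum_congr rfl fun p _ => (mem_symTwo.1 hf _ _).symm
  rw [pullDiv_apply, ← sum_actS_eq_pushDiv, ← sum_actS_eq_pushDiv, hswap, Pi.smul_apply,
    Finset.sum_apply, smul_eq_mul, two_mul]

lemma card_sq_smul_sub_sum_actS_mem_relN {f : G × G → ℂ} (hf : f ∈ symTwo G) :
    (Fintype.card G : ℂ) ^ 2 • f - ∑ p : G × G, actS p.1 p.2 f ∈ relN G := by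
  have hcard : (Fintype.card G : ℂ) ^ 2 • f = ∑ _p : G × G, f := by
    rw [sum_const, card_univ, Fintype.card_prod, ← Nat.cast_smul_eq_nsmul ℂ]
    push_cast
    ring_nf
  rw [hcard, ← sum_sub_distrib]
  exact Submodule.sum_mem _ fun p _ => Submodule.subset_span ⟨p.1, p.2, f, hf, rfl⟩

end

section

variable (G : Type*) [Group G]

abbrev SymCoinv := symTwo G ⧸ relNS G

abbrev ClassCoinv := classFun G ⧸ LinearMap.range (LinearMap.id - classFunInv G)

variable {G} in
lemma mk_classFunInv (φ : classFun G) :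
    (Submodule.Quotient.mk (classFunInv G φ) : ClassCoinv G) = Submodule.Quotient.mk φ := by
  rw [Submodule.Quotient.eq]
  exact ⟨-φ, by simp [neg_add_eq_sub]⟩

variable [Fintype G]

def coinvToClass : SymCoinv G →ₗ[ℂ] ClassCoinv G :=
  (relNS G).liftQ
    ((LinearMap.range _).mkQ ∘ₗ (pushDiv G).restrict fun f _ => pushDiv_mem_classFun f)
    fun f hf => by
      have hf0 : (pushDiv G).restrict (fun f _ => pushDiv_mem_classFun f) f = 0 :=
        Subtype.ext (relN_le_ker_pushDiv hf)
      rw [LinearMap.mem_ker, LinearMap.comp_apply, hf0, map_zero]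

noncomputable def classToCoinv : ClassCoinv G →ₗ[ℂ] SymCoinv G :=
  (LinearMap.range _).liftQ
    ((2 * (Fintype.card G : ℂ) ^ 2)⁻¹ •
      (relNS G).mkQ ∘ₗ (pullDiv G).restrict fun φ _ => pullDiv_mem_symTwo φ)
    (by
      rintro _ ⟨φ, rfl⟩
      have hφ0 : (pullDiv G).restrict (fun φ _ => pullDiv_mem_symTwo φ)
          ((LinearMap.id - classFunInv G : classFun G →ₗ[ℂ] classFun G) φ) = 0 :=
        Subtype.ext (by
          change pullDiv G (φ - LinearMap.funLeft ℂ ℂ (fun g : G => g⁻¹) φ) = 0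
          rw [map_sub, pullDiv_comp_inv, sub_self])
      rw [LinearMap.mem_ker, LinearMap.smul_apply, LinearMap.comp_apply, hφ0, map_zero,
        smul_zero])

variable {G} in
lemma coinvToClass_mk (f : symTwo G) :
    coinvToClass G (Submodule.Quotient.mk f) =
      Submodule.Quotient.mk ⟨pushDiv G f, pushDiv_mem_classFun (f : G × G → ℂ)⟩ := rfl

variable {G} in
lemma classToCoinv_mk (φ : classFun G) :
    classToCoinv G (Submodule.Quotient.mk φ) =
      (2 * (Fintype.card G : ℂ) ^ 2)⁻¹ •
        Submodule.Quotient.mk ⟨pullDiv G φ, pullDiv_mem_symTwo (φ : G → ℂ)⟩ := rfl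

lemma coinvToClass_comp_classToCoinv :
    coinvToClass G ∘ₗ classToCoinv G = LinearMap.id := by
  refine Submodule.linearMap_qext _ (LinearMap.ext fun φ => ?_)
  have hTS : (⟨pushDiv G (pullDiv G φ), pushDiv_mem_classFun _⟩ : classFun G) =
      (Fintype.card G : ℂ) ^ 2 • (φ + classFunInv G φ) :=
    Subtype.ext (pushDiv_pullDiv φ.2)
  have hcard : (Fintype.card G : ℂ) ≠ 0 := Nat.cast_ne_zero.2 Fintype.card_ne_zero
  simp only [LinearMap.comp_apply, Submodule.mkQ_apply, classToCoinv_mk, map_smul,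
    coinvToClass_mk, hTS, Submodule.Quotient.mk_smul, Submodule.Quotient.mk_add,
    mk_classFunInv, ← two_smul ℂ, smul_smul, LinearMap.id_apply]
  rw [show (2 * (Fintype.card G : ℂ) ^ 2)⁻¹ * ((Fintype.card G : ℂ) ^ 2 * 2) = 1 by
    field_simp, one_smul]

lemma classToCoinv_comp_coinvToClass :
    classToCoinv G ∘ₗ coinvToClass G = LinearMap.id := by
  refine Submodule.linearMap_qext _ (LinearMap.ext fun f => ?_)
  simp only [LinearMap.comp_apply, Submodule.mkQ_apply, coinvToClass_mk, classToCoinv_mk,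
    LinearMap.id_apply, ← Submodule.Quotient.mk_smul, Submodule.Quotient.eq]
  change (2 * (Fintype.card G : ℂ) ^ 2)⁻¹ • pullDiv G (pushDiv G f) - f ∈ relN G
  have hcard : (Fintype.card G : ℂ) ≠ 0 := Nat.cast_ne_zero.2 Fintype.card_ne_zero
  have hrel : (2 * (Fintype.card G : ℂ) ^ 2)⁻¹ • pullDiv G (pushDiv G f) - f =
      (-((Fintype.card G : ℂ) ^ 2)⁻¹) •
        ((Fintype.card G : ℂ) ^ 2 • (f : G × G → ℂ) - ∑ p : G × G, actS p.1 p.2 f) := by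
    have h2 : (2 * (Fintype.card G : ℂ) ^ 2)⁻¹ * 2 = ((Fintype.card G : ℂ) ^ 2)⁻¹ := by
      field_simp
    rw [pullDiv_pushDiv f.2, smul_smul, h2, smul_sub, smul_smul, neg_mul,
      inv_mul_cancel₀ (pow_ne_zero 2 hcard), neg_smul, one_smul, neg_smul]
    abel
  rw [hrel]
  exact Submodule.smul_mem _ _ (card_sq_smul_sub_sum_actS_mem_relN f.2)

lemma sigmaQ_comp_classToCoinv : sigmaQ G ∘ₗ classToCoinv G = classToCoinv G := by
  refine Submodule.linearMap_qext _ (LinearMap.ext fun φ => ?_)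
  have hfix : sigmaS G ⟨pullDiv G φ, pullDiv_mem_symTwo (φ : G → ℂ)⟩ =
      ⟨pullDiv G φ, pullDiv_mem_symTwo (φ : G → ℂ)⟩ :=
    Subtype.ext (sigmaTwo_pullDiv φ.2)
  simp only [LinearMap.comp_apply, Submodule.mkQ_apply, classToCoinv_mk, map_smul, sigmaQ,
    Submodule.mapQ_apply, hfix]

lemma sigmaQ_eq_id : sigmaQ G = LinearMap.id :=
  calc sigmaQ G = sigmaQ G ∘ₗ classToCoinv G ∘ₗ coinvToClass G := by
        rw [classToCoinv_comp_coinvToClass, LinearMap.comp_id]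
    _ = classToCoinv G ∘ₗ coinvToClass G := by
        rw [← LinearMap.comp_assoc, sigmaQ_comp_classToCoinv]
    _ = LinearMap.id := classToCoinv_comp_coinvToClass G

noncomputable def coinvEquivClass : SymCoinv G ≃ₗ[ℂ] ClassCoinv G :=
  .ofLinearMap (coinvToClass G) (classToCoinv G) (coinvToClass_comp_classToCoinv G)
    (classToCoinv_comp_coinvToClass G)

end

/-- For a finite group `G`, the `ℤ₂`-invariant part of the `(G × G)`-coinvariants of
`Sym²(ℂ[G])` is `ℂ`-linearly isomorphic to the `ℤ₂`-coinvariants of `ℂ[Ĝ]`, where `Ĝ` is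
the set of conjugacy classes of `G` (modelled by class functions) and `ℤ₂` acts by
inversion. -/
theorem sym2_coinvariants_iso_conj (G : Type*) [Group G] [Finite G] :
    Nonempty
      ((LinearMap.ker (sigmaQ G - LinearMap.id) : Submodule ℂ (symTwo G ⧸ relNS G)) ≃ₗ[ℂ]
        (classFun G ⧸ LinearMap.range (LinearMap.id - classFunInv G))) := by
  have : Fintype G := Fintype.ofFinite G
  rw [sigmaQ_eq_id, sub_self, LinearMap.ker_zero]
  exact ⟨(LinearEquiv.ofTop ⊤ rfl).trans (coinvEquivClass G)⟩
end

section
/- For the cyclic group π = ℤ/n (n ≥ 1), the ℂ-linear map W^even on Λ³ℂ[π] defined by W^even(tᵃ ∧ tᵇ ∧ tᶜ) = t^{b−a} ∧ t^{c−b} ∧ t^{a−c} + t^{a−b} ∧ t^{b−c} ∧ t^{c−a} is well-defined, alternating, invariant under the diagonal action (left and right multiplication) of π × π on ℂ[π], and invariant under the involution sending each group element to its inverse. -/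
open ExteriorAlgebra

/- We model the group algebra `ℂ[π]` of `π = ℤ/n` as the functions `ZMod n → ℂ`, with basis
`e a = Pi.single a 1` (corresponding to `tᵃ`).  `Λ³ℂ[π]` is the graded piece `⋀[ℂ]^3` of the
exterior algebra, generated by the wedges `ιMulti ![e a, e b, e c] = tᵃ ∧ tᵇ ∧ tᶜ`.  The
`π × π`-action on the basis is `tᵃ ↦ t^{a+g-h}`, extended diagonally to `Λ³`; the involution
negates exponents. -/

/-- The basis vector `tᵃ` of `ℂ[π]`, `π = ℤ/n`. -/
noncomputable def bas (n : ℕ) (a : ZMod n) : ZMod n → ℂ := Pi.single a 1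

/-! The formula assigns to each triple `(a, b, c)` a vector `w a b c` that changes sign under
every transposition of `a, b, c`: a transposition exchanges the two wedges, up to a transposition
of their factors. Hence `v ↦ ∑_f (∏_k v_k (f k)) • w f` is multilinear and alternating (when
`v i = v j`, the terms of `f` and `f ∘ (i j)` cancel) and factors through `Λ³`. Both the
`π × π`-action and the involution act on the indices `f` through a bijection of `π` that leaves
`w` unchanged: translations preserve all differences, and negation exchanges the two wedges. -/

namespace AlternatingMap

section Fin3

variable {R M N : Type*} [CommRing R] [AddCommGroup M] [Module R M] [AddCommGroup N]
  [Module R N] (φ : M [⋀^Fin 3]→ₗ[R] N) (u v w : M)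

theorem map_vecCons_swap₀₁ : φ ![v, u, w] = -φ ![u, v, w] := by
  rw [← φ.map_swap _ (show (0 : Fin 3) ≠ 1 by decide)]
  congr 1
  funext k
  fin_cases k <;> rfl

theorem map_vecCons_swap₁₂ : φ ![u, w, v] = -φ ![u, v, w] := by
  rw [← φ.map_swap _ (show (1 : Fin 3) ≠ 2 by decide)]
  congr 1
  funext k
  fin_cases k <;> rfl

theorem map_vecCons_swap₀₂ : φ ![w, v, u] = -φ ![u, v, w] := by
  rw [← φ.map_swap _ (show (0 : Fin 3) ≠ 2 by decide)]
  congr 1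
  funext k
  fin_cases k <;> rfl

end Fin3

section OfAntisymm

variable {R N ι κ : Type*} [CommRing R] [AddCommGroup N] [Module R N] [IsAddTorsionFree N]
  [Fintype ι] [Fintype κ] [DecidableEq κ]
  (w : (κ → ι) → N) (hw : ∀ f i j, i ≠ j → w (f ∘ Equiv.swap i j) = -w f)

noncomputable def ofAntisymm : (ι → R) [⋀^κ]→ₗ[R] N where
  toMultilinearMap := ∑ f : κ → ι,
    (MultilinearMap.mkPiRing R κ (w f)).compLinearMap fun k => LinearMap.proj (f k)
  map_eq_zero_of_eq' v i j hv hij := by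
    simp only [MultilinearMap.toFun_eq_coe, sum_apply, MultilinearMap.compLinearMap_apply,
      LinearMap.coe_proj, Function.eval, MultilinearMap.mkPiRing_apply]
    refine Finset.sum_involution (fun f _ => f ∘ Equiv.swap i j) (fun f _ => ?_)
      (fun f _ hf hfix => hf ?_) (fun _ _ => Finset.mem_univ _)
      (fun f _ => by funext k; simp)
    · have hprod : ∏ k, v k ((f ∘ Equiv.swap i j) k) = ∏ k, v k (f k) := by
        refine Fintype.prod_equiv (Equiv.swap i j) _ _ fun k => ?_
        rw [Function.comp_apply, Equiv.apply_swap_eq_self hv]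
      rw [hprod, hw f i j hij, smul_neg, add_neg_cancel]
    · have hfix' : w f = -w f := by rw [← hw f i j hij, hfix]
      rw [self_eq_neg.mp hfix', smul_zero]

theorem ofAntisymm_apply (v : κ → ι → R) :
    ofAntisymm w hw v = ∑ f : κ → ι, (∏ k, v k (f k)) • w f := by
  simp [ofAntisymm]

theorem ofAntisymm_apply_single [DecidableEq ι] (f : κ → ι) :
    ofAntisymm (R := R) w hw (fun k => Pi.single (f k) 1) = w f := by
  rw [ofAntisymm_apply, Fintype.sum_eq_single f]
  · simp
  · intro g hg
    obtain ⟨k, hk⟩ := Function.ne_iff.mp hg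
    rw [Finset.prod_eq_zero (Finset.mem_univ k) (Pi.single_eq_of_ne hk _), zero_smul]

theorem ofAntisymm_compLinearMap_funLeft (e : ι ≃ ι) (he : ∀ f, w (e ∘ f) = w f) :
    (ofAntisymm (R := R) w hw).compLinearMap (LinearMap.funLeft R R e) = ofAntisymm w hw := by
  ext v
  simp only [compLinearMap_apply, ofAntisymm_apply, LinearMap.funLeft_apply]
  exact Fintype.sum_equiv (Equiv.arrowCongr (Equiv.refl κ) e) _ _ fun f => by
    rw [← he f]; rfl

end OfAntisymm

end AlternatingMap

namespace exteriorPower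

variable {R M N P : Type*} [CommRing R] [AddCommGroup M] [Module R M] [AddCommGroup N]
  [Module R N] [AddCommGroup P] [Module R P] {n : ℕ}

instance {K V : Type*} [Field K] [CharZero K] [AddCommGroup V] [Module K V] :
    IsAddTorsionFree (⋀[K]^n V) :=
  .of_isTorsionFree K _

theorem coe_map_apply (F : M →ₗ[R] N) (x : ⋀[R]^n M) :
    (map n F x : ExteriorAlgebra R N) = ExteriorAlgebra.map F x := by
  have hcomp : (⋀[R]^n N).subtype ∘ₗ map n F
      = (ExteriorAlgebra.map F).toLinearMap ∘ₗ (⋀[R]^n M).subtype := by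
    ext v
    simp [ExteriorAlgebra.map_apply_ιMulti]
  exact LinearMap.congr_fun hcomp x

theorem alternatingMapLinearEquiv_comp_map (A : N [⋀^Fin n]→ₗ[R] P) (F : M →ₗ[R] N) :
    alternatingMapLinearEquiv A ∘ₗ map n F = alternatingMapLinearEquiv (A.compLinearMap F) := by
  ext v
  simp [Function.comp_def]

end exteriorPower

section WEven

open AlternatingMap

variable {K G : Type*} [Field K] [AddCommGroup G] [DecidableEq G]

variable (K) in
noncomputable def wEven (a b c : G) : ⋀[K]^3 (G → K) :=
  exteriorPower.ιMulti K 3 ![Pi.single (b - a) 1, Pi.single (c - b) 1, Pi.single (a - c) 1]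
    + exteriorPower.ιMulti K 3 ![Pi.single (a - b) 1, Pi.single (b - c) 1, Pi.single (c - a) 1]

theorem wEven_swap₀₁ (a b c : G) : wEven K b a c = -wEven K a b c := by
  rw [wEven, wEven, map_vecCons_swap₁₂ _ (Pi.single (a - b) 1) (Pi.single (b - c) 1),
    map_vecCons_swap₁₂ _ (Pi.single (b - a) 1) (Pi.single (c - b) 1), neg_add_rev]

theorem wEven_swap₁₂ (a b c : G) : wEven K a c b = -wEven K a b c := by
  rw [wEven, wEven, map_vecCons_swap₀₂ _ (Pi.single (a - b) 1) (Pi.single (b - c) 1),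
    map_vecCons_swap₀₂ _ (Pi.single (b - a) 1) (Pi.single (c - b) 1), neg_add_rev]

theorem wEven_swap₀₂ (a b c : G) : wEven K c b a = -wEven K a b c := by
  rw [wEven, wEven, map_vecCons_swap₀₁ _ (Pi.single (a - b) 1) (Pi.single (b - c) 1),
    map_vecCons_swap₀₁ _ (Pi.single (b - a) 1) (Pi.single (c - b) 1), neg_add_rev]

theorem wEven_comp_swap (f : Fin 3 → G) (i j : Fin 3) (hij : i ≠ j) :
    wEven K ((f ∘ Equiv.swap i j) 0) ((f ∘ Equiv.swap i j) 1) ((f ∘ Equiv.swap i j) 2)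
      = -wEven K (f 0) (f 1) (f 2) := by
  fin_cases i <;> fin_cases j
  all_goals first
    | exact absurd rfl hij
    | exact wEven_swap₀₁ _ _ _
    | exact wEven_swap₁₂ _ _ _
    | exact wEven_swap₀₂ _ _ _

theorem wEven_add_const (a b c d : G) : wEven K (a + d) (b + d) (c + d) = wEven K a b c := by
  simp only [wEven, add_sub_add_right_eq_sub]

theorem wEven_neg (a b c : G) : wEven K (-a) (-b) (-c) = wEven K a b c := by
  rw [wEven, wEven, add_comm]
  simp only [neg_sub_neg]

variable [Fintype G] [CharZero K]

variable (K G) in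
noncomputable def wEvenMap : ⋀[K]^3 (G → K) →ₗ[K] ⋀[K]^3 (G → K) :=
  exteriorPower.alternatingMapLinearEquiv
    (ofAntisymm (fun f : Fin 3 → G => wEven K (f 0) (f 1) (f 2)) wEven_comp_swap)

theorem wEvenMap_ιMulti_single (a b c : G) :
    wEvenMap K G (exteriorPower.ιMulti K 3 ![Pi.single a 1, Pi.single b 1, Pi.single c 1])
      = wEven K a b c := by
  have hv : ![Pi.single a 1, Pi.single b 1, Pi.single c 1]
      = fun k => (Pi.single (![a, b, c] k) 1 : G → K) := by
    funext k
    fin_cases k <;> rfl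
  rw [wEvenMap, exteriorPower.alternatingMapLinearEquiv_apply_ιMulti, hv,
    ofAntisymm_apply_single]
  rfl

theorem wEvenMap_map_funLeft (e : G ≃ G)
    (he : ∀ a b c, wEven K (e a) (e b) (e c) = wEven K a b c) (x : ⋀[K]^3 (G → K)) :
    wEvenMap K G (exteriorPower.map 3 (LinearMap.funLeft K K e) x) = wEvenMap K G x := by
  rw [← LinearMap.comp_apply, wEvenMap, exteriorPower.alternatingMapLinearEquiv_comp_map,
    ofAntisymm_compLinearMap_funLeft _ _ e fun f => he _ _ _]

theorem wEvenMap_eq_of_coe_eq_map (e : G ≃ G)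
    (he : ∀ a b c, wEven K (e a) (e b) (e c) = wEven K a b c) {x y : ⋀[K]^3 (G → K)}
    (hxy : (y : ExteriorAlgebra K (G → K)) = ExteriorAlgebra.map (LinearMap.funLeft K K e) x) :
    wEvenMap K G y = wEvenMap K G x := by
  have hy : y = exteriorPower.map 3 (LinearMap.funLeft K K e) x :=
    Subtype.ext (hxy.trans (exteriorPower.coe_map_apply _ x).symm)
  rw [hy, wEvenMap_map_funLeft e he]

end WEven

/-- For `π = ℤ/n`, the map `W^even : Λ³ℂ[π] → Λ³ℂ[π]`,
`tᵃ ∧ tᵇ ∧ tᶜ ↦ t^{b−a} ∧ t^{c−b} ∧ t^{a−c} + t^{a−b} ∧ t^{b−c} ∧ t^{c−a}`, is a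
well-defined (alternating) linear map, invariant under the diagonal `π × π`-action and
under the involution inverting group elements. -/
theorem weven_well_defined (n : ℕ) (hn : 0 < n) :
    ∃ Φ : (⋀[ℂ]^3 (ZMod n → ℂ)) →ₗ[ℂ] (⋀[ℂ]^3 (ZMod n → ℂ)),
      (∀ (a b c : ZMod n) (x : ⋀[ℂ]^3 (ZMod n → ℂ)),
        (x : ExteriorAlgebra ℂ (ZMod n → ℂ)) = ιMulti ℂ 3 ![bas n a, bas n b, bas n c] →
          (Φ x : ExteriorAlgebra ℂ (ZMod n → ℂ))
            = ιMulti ℂ 3 ![bas n (b - a), bas n (c - b), bas n (a - c)]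
              + ιMulti ℂ 3 ![bas n (a - b), bas n (b - c), bas n (c - a)]) ∧
      (∀ (g h : ZMod n) (x y : ⋀[ℂ]^3 (ZMod n → ℂ)),
        (y : ExteriorAlgebra ℂ (ZMod n → ℂ))
            = ExteriorAlgebra.map (LinearMap.funLeft ℂ ℂ (fun t : ZMod n => t + g - h)) x →
          Φ y = Φ x) ∧
      (∀ x y : ⋀[ℂ]^3 (ZMod n → ℂ),
        (y : ExteriorAlgebra ℂ (ZMod n → ℂ))
            = ExteriorAlgebra.map (LinearMap.funLeft ℂ ℂ (fun t : ZMod n => -t)) x →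
          Φ y = Φ x) := by
  have : NeZero n := ⟨hn.ne'⟩
  refine ⟨wEvenMap ℂ (ZMod n), fun a b c x hx => ?_, fun g h x y hxy => ?_,
    fun x y hxy => wEvenMap_eq_of_coe_eq_map (Equiv.neg (ZMod n)) wEven_neg hxy⟩
  · obtain rfl : x = exteriorPower.ιMulti ℂ 3 ![bas n a, bas n b, bas n c] := Subtype.ext hx
    exact congrArg Subtype.val (wEvenMap_ιMulti_single a b c)
  · have hshift : (fun t : ZMod n => t + g - h) = Equiv.addRight (g - h) := by
      funext t
      exact add_sub_assoc t g h
    rw [hshift] at hxy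
    exact wEvenMap_eq_of_coe_eq_map (Equiv.addRight (g - h))
      (fun a b c => wEven_add_const a b c (g - h)) hxy
end

section
/- Let π = ℤ/n. The dimension of the subspace of (Sym³ ℂ[π]) invariant under the action of (π × π) ⋊ ℤ₂ equals p₃(n), the number of partitions of n into at most three parts. -/
/-- `p₃ m`: the number of partitions of `m` into at most three parts (`0` for `m < 0`). -/
noncomputable def p3 (m : ℤ) : ℕ :=
  {t : ℤ × ℤ × ℤ | 0 ≤ t.1 ∧ t.1 ≤ t.2.1 ∧ t.2.1 ≤ t.2.2 ∧ t.1 + t.2.1 + t.2.2 = m}.ncard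

/- We model `Sym³ ℂ[π]` for `π = ℤ/n` as the space of symmetric functions `π³ → ℂ`
(`ℂ[π]` has basis `π`, and in characteristic zero `Sym³` is the space of symmetric tensors).
The action of `(g,h) ∈ π × π` on a basis element `x` of `ℂ[π]` is `g x h⁻¹ = x + (g - h)`,
i.e. the diagonal action is simultaneous translation by an arbitrary `k ∈ π` in all three
coordinates; the `ℤ₂`-involution inverts (negates) all three group elements. -/

/-- The subspace of `Sym³ ℂ[ℤ/n]` invariant under `(π × π) ⋊ ℤ₂`: symmetric functions on
`(ℤ/n)³` invariant under simultaneous translation and under simultaneous negation. -/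
noncomputable def sym3Invariants (n : ℕ) : Submodule ℂ ((ZMod n × ZMod n × ZMod n) → ℂ) :=
  (LinearMap.ker (LinearMap.funLeft ℂ ℂ
      (fun t : ZMod n × ZMod n × ZMod n => (t.2.1, t.1, t.2.2)) - LinearMap.id)) ⊓
  (LinearMap.ker (LinearMap.funLeft ℂ ℂ
      (fun t : ZMod n × ZMod n × ZMod n => (t.1, t.2.2, t.2.1)) - LinearMap.id)) ⊓
  (⨅ k : ZMod n, LinearMap.ker (LinearMap.funLeft ℂ ℂ
      (fun t : ZMod n × ZMod n × ZMod n => (t.1 + k, t.2.1 + k, t.2.2 + k)) - LinearMap.id)) ⊓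
  (LinearMap.ker (LinearMap.funLeft ℂ ℂ
      (fun t : ZMod n × ZMod n × ZMod n => (-t.1, -t.2.1, -t.2.2)) - LinearMap.id))

def sort3 (t : ℤ × ℤ × ℤ) : ℤ × ℤ × ℤ :=
  if t.1 ≤ t.2.1 then
    if t.2.1 ≤ t.2.2 then (t.1, t.2.1, t.2.2)
    else if t.1 ≤ t.2.2 then (t.1, t.2.2, t.2.1) else (t.2.2, t.1, t.2.1)
  else
    if t.1 ≤ t.2.2 then (t.2.1, t.1, t.2.2)
    else if t.2.1 ≤ t.2.2 then (t.2.1, t.2.2, t.1) else (t.2.2, t.2.1, t.1)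

lemma sort3_sorted (t : ℤ × ℤ × ℤ) :
    (sort3 t).1 ≤ (sort3 t).2.1 ∧ (sort3 t).2.1 ≤ (sort3 t).2.2 := by
  obtain ⟨a, b, c⟩ := t
  simp only [sort3]
  split_ifs <;> constructor <;> dsimp <;> omega

lemma sort3_perm (a b c : ℤ) : sort3 (a,b,c) = (a,b,c) ∨ sort3 (a,b,c) = (a,c,b) ∨
    sort3 (a,b,c) = (b,a,c) ∨ sort3 (a,b,c) = (b,c,a) ∨
    sort3 (a,b,c) = (c,a,b) ∨ sort3 (a,b,c) = (c,b,a) := by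
  simp only [sort3]
  split_ifs <;> tauto

lemma sort3_of_sorted {a b c : ℤ} (h1 : a ≤ b) (h2 : b ≤ c) : sort3 (a,b,c) = (a,b,c) := by
  simp only [sort3]
  split_ifs <;> first | rfl | omega

lemma sort3_comm12 (a b c : ℤ) : sort3 (a,b,c) = sort3 (b,a,c) := by
  simp only [sort3]
  split_ifs <;> simp [Prod.ext_iff] <;> omega

lemma sort3_comm23 (a b c : ℤ) : sort3 (a,b,c) = sort3 (a,c,b) := by
  simp only [sort3]
  split_ifs <;> simp [Prod.ext_iff] <;> omega

def gapz (n : ℕ) (u v : ZMod n) : ℤ := ((v - u).val : ℤ)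

section gap
variable {n : ℕ} [NeZero n]

lemma gapz_nonneg (u v : ZMod n) : 0 ≤ gapz n u v := Int.natCast_nonneg _

lemma gapz_lt (u v : ZMod n) : gapz n u v < n := by
  have := ZMod.val_lt (v - u); unfold gapz; exact_mod_cast this

lemma gapz_cast (u v : ZMod n) : ((gapz n u v : ℤ) : ZMod n) = v - u := by
  simp [gapz, ZMod.natCast_val, ZMod.cast_id]

omit [NeZero n] in
lemma gapz_eq_zero_iff (u v : ZMod n) : gapz n u v = 0 ↔ u = v := by
  rw [gapz]
  rw [show ((((v-u).val : ℕ)) : ℤ) = 0 ↔ (v-u).val = 0 by exact_mod_cast Iff.rfl]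
  rw [ZMod.val_eq_zero, sub_eq_zero, eq_comm]

omit [NeZero n] in
lemma gapz_self (u : ZMod n) : gapz n u u = 0 := by simp [gapz_eq_zero_iff]

lemma gapz_add_gapz {u v : ZMod n} (h : u ≠ v) : gapz n u v + gapz n v u = n := by
  have hvu : v - u ≠ 0 := sub_ne_zero.mpr (Ne.symm h)
  have huv : u - v = -(v - u) := by ring
  rw [gapz, gapz, huv, ZMod.neg_val, if_neg hvu]
  have h0 : (v-u).val ≠ 0 := by rwa [Ne, ZMod.val_eq_zero]
  push_cast [Nat.cast_sub (le_of_lt (ZMod.val_lt (v-u)))]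
  ring

lemma gapz_pair (u v : ZMod n) : gapz n u v + gapz n v u = 0 ∨ gapz n u v + gapz n v u = n := by
  by_cases h : u = v
  · subst h; left; simp [gapz_self]
  · right; exact gapz_add_gapz h

omit [NeZero n] in
lemma gapz_translate (u v k : ZMod n) : gapz n (u + k) (v + k) = gapz n u v := by
  simp only [gapz]; ring_nf

omit [NeZero n] in
lemma gapz_neg (u v : ZMod n) : gapz n (-u) (-v) = gapz n v u := by
  simp only [gapz]; ring_nf

lemma gapz_sum (x y z : ZMod n) :
    gapz n x y + gapz n y z + gapz n z x = 0 ∨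
    gapz n x y + gapz n y z + gapz n z x = n ∨
    gapz n x y + gapz n y z + gapz n z x = 2 * n := by
  have hd : (n : ℤ) ∣ gapz n x y + gapz n y z + gapz n z x := by
    rw [← ZMod.intCast_zmod_eq_zero_iff_dvd]
    push_cast [gapz_cast]
    ring
  obtain ⟨k, hk⟩ := hd
  have h1 := gapz_nonneg (n := n) x y; have h2 := gapz_nonneg (n := n) y z
  have h3 := gapz_nonneg (n := n) z x
  have l1 := gapz_lt x y; have l2 := gapz_lt y z; have l3 := gapz_lt z x
  have hn : 0 < (n : ℤ) := by exact_mod_cast Nat.pos_of_ne_zero (NeZero.ne n)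
  have hk0 : 0 ≤ k := by nlinarith
  have hk3 : k < 3 := by nlinarith
  interval_cases k <;> omega

end gap

/-- canonical representative triple for a gap triple -/
def psi (n : ℕ) (p : ℤ × ℤ × ℤ) : ZMod n × ZMod n × ZMod n :=
  (0, (p.1 : ZMod n), ((p.1 + p.2.1 : ℤ) : ZMod n))

/-- the sorted gap triple of a triple in `(ℤ/n)³` -/
def Phi (n : ℕ) (t : ZMod n × ZMod n × ZMod n) : ℤ × ℤ × ℤ :=
  if gapz n t.1 t.2.1 + gapz n t.2.1 t.2.2 + gapz n t.2.2 t.1 = n then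
    sort3 (gapz n t.1 t.2.1, gapz n t.2.1 t.2.2, gapz n t.2.2 t.1)
  else if gapz n t.2.1 t.1 + gapz n t.2.2 t.2.1 + gapz n t.1 t.2.2 = n then
    sort3 (gapz n t.2.1 t.1, gapz n t.2.2 t.2.1, gapz n t.1 t.2.2)
  else (0, 0, (n : ℤ))

section phi
variable {n : ℕ} [NeZero n]

lemma cast_neg_eq {a b : ℤ} (h : a + b = n) : (-(a : ZMod n) : ZMod n) = (b : ZMod n) := by
  apply neg_eq_of_add_eq_zero_right
  have h2 : ((a + b : ℤ) : ZMod n) = 0 := by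
    rw [h]; exact_mod_cast ZMod.natCast_self n
  push_cast at h2
  exact h2

/-- if both gap orientations sum to `n`, the sorted gap triples agree -/
lemma both_n (x y z : ZMod n)
    (H1 : gapz n x y + gapz n y z + gapz n z x = n)
    (H2 : gapz n y x + gapz n z y + gapz n x z = n) :
    sort3 (gapz n x y, gapz n y z, gapz n z x) = sort3 (gapz n y x, gapz n z y, gapz n x z) := by
  have hn : 0 < (n : ℤ) := by exact_mod_cast Nat.pos_of_ne_zero (NeZero.ne n)
  rcases gapz_pair x y with p | p
  · -- x = y
    have hxy : x = y := by
      rw [← gapz_eq_zero_iff (n := n) x y]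
      have := gapz_nonneg (n := n) x y; have := gapz_nonneg (n := n) y x; omega
    subst hxy
    rw [gapz_self, sort3_comm23]
  · rcases gapz_pair y z with q | q
    · have hyz : y = z := by
        rw [← gapz_eq_zero_iff (n := n) y z]
        have := gapz_nonneg (n := n) y z; have := gapz_nonneg (n := n) z y; omega
      subst hyz
      rw [gapz_self]
      rw [sort3_comm12, sort3_comm23, sort3_comm12]
    · rcases gapz_pair z x with r | r
      · have hzx : z = x := by
          rw [← gapz_eq_zero_iff (n := n) z x]
          have := gapz_nonneg (n := n) z x; have := gapz_nonneg (n := n) x z; omega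
        subst hzx
        rw [gapz_self, sort3_comm12]
      · exfalso; omega

lemma Phi_swap1 (x y z : ZMod n) : Phi n (y, x, z) = Phi n (x, y, z) := by
  simp only [Phi]
  by_cases H1 : gapz n x y + gapz n y z + gapz n z x = (n : ℤ) <;>
  by_cases H2 : gapz n y x + gapz n z y + gapz n x z = (n : ℤ)
  · rw [if_pos (by omega : gapz n y x + gapz n x z + gapz n z y = (n:ℤ)), if_pos H1]
    rw [show sort3 (gapz n y x, gapz n x z, gapz n z y)
        = sort3 (gapz n y x, gapz n z y, gapz n x z) from sort3_comm23 _ _ _]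
    exact (both_n x y z H1 H2).symm
  · rw [if_neg (by omega : ¬ gapz n y x + gapz n x z + gapz n z y = (n:ℤ))]
    rw [if_pos (by omega : gapz n x y + gapz n z x + gapz n y z = (n:ℤ)), if_pos H1]
    exact sort3_comm23 _ _ _
  · rw [if_pos (by omega : gapz n y x + gapz n x z + gapz n z y = (n:ℤ)), if_neg H1,
      if_pos H2]
    exact sort3_comm23 _ _ _
  · rw [if_neg (by omega : ¬ gapz n y x + gapz n x z + gapz n z y = (n:ℤ)),
      if_neg (by omega : ¬ gapz n x y + gapz n z x + gapz n y z = (n:ℤ)),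
      if_neg H1, if_neg H2]

lemma Phi_swap2 (x y z : ZMod n) : Phi n (x, z, y) = Phi n (x, y, z) := by
  simp only [Phi]
  by_cases H1 : gapz n x y + gapz n y z + gapz n z x = (n : ℤ) <;>
  by_cases H2 : gapz n y x + gapz n z y + gapz n x z = (n : ℤ)
  · rw [if_pos (by omega : gapz n x z + gapz n z y + gapz n y x = (n:ℤ)), if_pos H1]
    rw [show sort3 (gapz n x z, gapz n z y, gapz n y x)
        = sort3 (gapz n y x, gapz n z y, gapz n x z) from by
      rw [sort3_comm12, sort3_comm23, sort3_comm12]]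
    exact (both_n x y z H1 H2).symm
  · rw [if_neg (by omega : ¬ gapz n x z + gapz n z y + gapz n y x = (n:ℤ))]
    rw [if_pos (by omega : gapz n z x + gapz n y z + gapz n x y = (n:ℤ)), if_pos H1]
    rw [sort3_comm12, sort3_comm23, sort3_comm12]
  · rw [if_pos (by omega : gapz n x z + gapz n z y + gapz n y x = (n:ℤ)), if_neg H1,
      if_pos H2]
    rw [sort3_comm12, sort3_comm23, sort3_comm12]
  · rw [if_neg (by omega : ¬ gapz n x z + gapz n z y + gapz n y x = (n:ℤ)),
      if_neg (by omega : ¬ gapz n z x + gapz n y z + gapz n x y = (n:ℤ)),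
      if_neg H1, if_neg H2]

lemma Phi_translate (x y z k : ZMod n) : Phi n (x + k, y + k, z + k) = Phi n (x, y, z) := by
  simp only [Phi, gapz_translate]

lemma Phi_neg (x y z : ZMod n) : Phi n (-x, -y, -z) = Phi n (x, y, z) := by
  simp only [Phi, gapz_neg]
  by_cases H1 : gapz n x y + gapz n y z + gapz n z x = (n : ℤ) <;>
  by_cases H2 : gapz n y x + gapz n z y + gapz n x z = (n : ℤ)
  · rw [if_pos H2, if_pos H1]
    exact (both_n x y z H1 H2).symm
  · rw [if_neg H2, if_pos H1, if_pos H1]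
  · rw [if_pos H2, if_neg H1, if_pos H2]
  · rw [if_neg H2, if_neg H1, if_neg H1, if_neg H2]

end phi

section main
variable {n : ℕ} [NeZero n] {f : (ZMod n × ZMod n × ZMod n) → ℂ}
  (h1 : ∀ x y z : ZMod n, f (y, x, z) = f (x, y, z))
  (h2 : ∀ x y z : ZMod n, f (x, z, y) = f (x, y, z))
  (h3 : ∀ k x y z : ZMod n, f (x + k, y + k, z + k) = f (x, y, z))
  (h4 : ∀ x y z : ZMod n, f (-x, -y, -z) = f (x, y, z))

include h1 h2 h3 in
lemma f_rot (g1 g2 g3 : ℤ) (hs : g1 + g2 + g3 = n) :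
    f (psi n (g2, g3, g1)) = f (psi n (g1, g2, g3)) := by
  have e2 : (g2 : ZMod n) + (g1 : ZMod n) = ((g1 + g2 : ℤ) : ZMod n) := by push_cast; ring
  have e3 : ((g2 + g3 : ℤ) : ZMod n) + (g1 : ZMod n) = 0 := by
    have h0 : ((g1 + g2 + g3 : ℤ) : ZMod n) = 0 := by
      rw [hs]; exact_mod_cast ZMod.natCast_self n
    push_cast at h0 ⊢
    linear_combination h0
  have hA : ((0 : ZMod n) + (g1 : ZMod n), (g2 : ZMod n) + (g1 : ZMod n),
      ((g2 + g3 : ℤ) : ZMod n) + (g1 : ZMod n))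
      = ((g1 : ZMod n), ((g1 + g2 : ℤ) : ZMod n), (0 : ZMod n)) := by
    rw [zero_add, e2, e3]
  calc f (psi n (g2, g3, g1))
      = f (0, (g2 : ZMod n), ((g2 + g3 : ℤ) : ZMod n)) := rfl
    _ = f (0 + (g1 : ZMod n), (g2 : ZMod n) + (g1 : ZMod n),
          ((g2 + g3 : ℤ) : ZMod n) + (g1 : ZMod n)) := (h3 _ 0 _ _).symm
    _ = f ((g1 : ZMod n), ((g1 + g2 : ℤ) : ZMod n), 0) := by rw [hA]
    _ = f ((g1 : ZMod n), 0, ((g1 + g2 : ℤ) : ZMod n)) := h2 _ _ _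
    _ = f (0, (g1 : ZMod n), ((g1 + g2 : ℤ) : ZMod n)) := h1 _ _ _
    _ = f (psi n (g1, g2, g3)) := rfl

include h2 h4 in
lemma f_rev (g1 g2 g3 : ℤ) (hs : g1 + g2 + g3 = n) :
    f (psi n (g3, g2, g1)) = f (psi n (g1, g2, g3)) := by
  have e2 : ((g3 + g2 : ℤ) : ZMod n) = -((g1 : ZMod n)) := by
    rw [cast_neg_eq (a := g1) (b := g3 + g2) (by omega)]
  have e3 : (g3 : ZMod n) = -(((g1 + g2 : ℤ) : ZMod n)) := by
    rw [cast_neg_eq (a := g1 + g2) (b := g3) (by omega)]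
  calc f (psi n (g3, g2, g1))
      = f (0, (g3 : ZMod n), ((g3 + g2 : ℤ) : ZMod n)) := rfl
    _ = f (0, ((g3 + g2 : ℤ) : ZMod n), (g3 : ZMod n)) := h2 _ _ _
    _ = f (-0, -((g1 : ZMod n)), -(((g1 + g2 : ℤ) : ZMod n))) := by
        rw [neg_zero, ← e2, ← e3]
    _ = f (0, (g1 : ZMod n), ((g1 + g2 : ℤ) : ZMod n)) := h4 _ _ _
    _ = f (psi n (g1, g2, g3)) := rfl

include h1 h2 h3 h4 in
lemma f_psi_sort (g1 g2 g3 : ℤ) (hs : g1 + g2 + g3 = n) :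
    f (psi n (sort3 (g1, g2, g3))) = f (psi n (g1, g2, g3)) := by
  rcases sort3_perm g1 g2 g3 with h | h | h | h | h | h <;> rw [h]
  · calc f (psi n (g1, g3, g2)) = f (psi n (g2, g3, g1)) :=
          f_rev h2 h4 g2 g3 g1 (by omega)
      _ = f (psi n (g1, g2, g3)) := f_rot h1 h2 h3 g1 g2 g3 hs
  · calc f (psi n (g2, g1, g3)) = f (psi n (g3, g1, g2)) :=
          f_rev h2 h4 g3 g1 g2 (by omega)
      _ = f (psi n (g1, g2, g3)) := (f_rot h1 h2 h3 g3 g1 g2 (by omega)).symm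
  · exact f_rot h1 h2 h3 g1 g2 g3 hs
  · exact (f_rot h1 h2 h3 g3 g1 g2 (by omega)).symm
  · exact f_rev h2 h4 g1 g2 g3 hs

include h3 in
lemma f_eq_raw (x y z : ZMod n) :
    f (psi n (gapz n x y, gapz n y z, gapz n z x)) = f (x, y, z) := by
  have e2 : ((gapz n x y : ℤ) : ZMod n) + x = y := by rw [gapz_cast]; ring
  have e3 : ((gapz n x y + gapz n y z : ℤ) : ZMod n) + x = z := by
    push_cast [gapz_cast]; ring
  calc f (psi n (gapz n x y, gapz n y z, gapz n z x))
      = f (0, ((gapz n x y : ℤ) : ZMod n), ((gapz n x y + gapz n y z : ℤ) : ZMod n)) := rfl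
    _ = f (0 + x, ((gapz n x y : ℤ) : ZMod n) + x,
          ((gapz n x y + gapz n y z : ℤ) : ZMod n) + x) := (h3 x 0 _ _).symm
    _ = f (x, y, z) := by rw [zero_add, e2, e3]

include h1 h2 h3 h4 in
lemma f_eq_psi_Phi (x y z : ZMod n) : f (psi n (Phi n (x, y, z))) = f (x, y, z) := by
  rw [Phi]
  dsimp only
  split_ifs with H1 H2
  · rw [f_psi_sort h1 h2 h3 h4 _ _ _ H1]
    exact f_eq_raw h3 x y z
  · rw [f_psi_sort h1 h2 h3 h4 _ _ _ H2]
    calc f (psi n (gapz n y x, gapz n z y, gapz n x z))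
        = f (psi n (gapz n (-x) (-y), gapz n (-y) (-z), gapz n (-z) (-x))) := by
          rw [gapz_neg, gapz_neg, gapz_neg]
      _ = f (-x, -y, -z) := f_eq_raw h3 (-x) (-y) (-z)
      _ = f (x, y, z) := h4 x y z
  · -- degenerate case : x = y = z
    have hn : 0 < (n : ℤ) := by exact_mod_cast Nat.pos_of_ne_zero (NeZero.ne n)
    have hxy : x = y := by
      by_contra hxy
      by_cases hyz : y = z
      · subst hyz
        have := gapz_add_gapz hxy
        have := gapz_add_gapz (Ne.symm hxy)
        have := gapz_self (n := n) y
        omega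
      · by_cases hzx : z = x
        · subst hzx
          have := gapz_add_gapz hxy
          have := gapz_add_gapz (Ne.symm hxy)
          have := gapz_self (n := n) z
          omega
        · have := gapz_add_gapz hxy
          have := gapz_add_gapz hyz
          have := gapz_add_gapz hzx
          have := gapz_sum (n := n) x y z
          have := gapz_sum (n := n) y x z
          omega
    subst hxy
    have hyz : x = z := by
      by_contra hyz
      have := gapz_add_gapz hyz
      have := gapz_add_gapz (Ne.symm hyz)
      have := gapz_self (n := n) x
      omega
    subst hyz
    calc f (psi n (0, 0, (n:ℤ)))
        = f (0, 0, 0) := by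
          show f (0, ((0:ℤ) : ZMod n), (((0:ℤ) + (0:ℤ) : ℤ) : ZMod n)) = _
          norm_num
      _ = f (0 + x, 0 + x, 0 + x) := (h3 x 0 0 0).symm
      _ = f (x, x, x) := by rw [zero_add]

end main

section phimem
variable {n : ℕ} [NeZero n]

lemma sort3_aux {a b c : ℤ} (ha : 0 ≤ a) (hb : 0 ≤ b) (hc : 0 ≤ c) :
    0 ≤ (sort3 (a,b,c)).1 ∧ (sort3 (a,b,c)).1 + (sort3 (a,b,c)).2.1 + (sort3 (a,b,c)).2.2
      = a + b + c := by
  rcases sort3_perm a b c with h | h | h | h | h | h <;> rw [h] <;> dsimp <;> omega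

lemma Phi_mem (t : ZMod n × ZMod n × ZMod n) :
    0 ≤ (Phi n t).1 ∧ (Phi n t).1 ≤ (Phi n t).2.1 ∧ (Phi n t).2.1 ≤ (Phi n t).2.2 ∧
      (Phi n t).1 + (Phi n t).2.1 + (Phi n t).2.2 = (n : ℤ) := by
  obtain ⟨x, y, z⟩ := t
  rw [Phi]
  dsimp only
  split_ifs with H1 H2
  · have hso := sort3_sorted (gapz n x y, gapz n y z, gapz n z x)
    have hau := sort3_aux (gapz_nonneg (n := n) x y) (gapz_nonneg (n := n) y z)
      (gapz_nonneg (n := n) z x)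
    exact ⟨hau.1, hso.1, hso.2, by omega⟩
  · have hso := sort3_sorted (gapz n y x, gapz n z y, gapz n x z)
    have hau := sort3_aux (gapz_nonneg (n := n) y x) (gapz_nonneg (n := n) z y)
      (gapz_nonneg (n := n) x z)
    exact ⟨hau.1, hso.1, hso.2, by omega⟩
  · have hn : 0 < (n : ℤ) := by exact_mod_cast Nat.pos_of_ne_zero (NeZero.ne n)
    refine ⟨?_, ?_, ?_, ?_⟩ <;> dsimp only <;> omega

lemma val_of_bounds {a : ℤ} (h0 : 0 ≤ a) (h : a < n) : (((a : ZMod n)).val : ℤ) = a := by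
  rw [ZMod.val_intCast]
  exact Int.emod_eq_of_lt h0 (by exact_mod_cast h)

lemma Phi_psi {g1 g2 g3 : ℤ} (h0 : 0 ≤ g1) (h12 : g1 ≤ g2) (h23 : g2 ≤ g3)
    (hs : g1 + g2 + g3 = n) : Phi n (psi n (g1, g2, g3)) = (g1, g2, g3) := by
  have hn : 0 < (n : ℤ) := by exact_mod_cast Nat.pos_of_ne_zero (NeZero.ne n)
  by_cases hg2 : g2 = 0
  · have hg1 : g1 = 0 := by omega
    have hg3 : g3 = (n : ℤ) := by omega
    subst hg1; subst hg2
    have hpsi : psi n ((0:ℤ), (0:ℤ), g3) = (0, 0, 0) := by simp [psi]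
    rw [hpsi, Phi]
    dsimp only
    rw [gapz_self, if_neg (by omega), if_neg (by omega), hg3]
  · have hb1 : g1 < (n : ℤ) := by omega
    have hb2 : g2 < (n : ℤ) := by omega
    have hb3 : g3 < (n : ℤ) := by omega
    have e1 : gapz n (0 : ZMod n) ((g1 : ℤ) : ZMod n) = g1 := by
      simp only [gapz, sub_zero]
      exact val_of_bounds h0 hb1
    have e2 : gapz n ((g1 : ℤ) : ZMod n) ((g1 + g2 : ℤ) : ZMod n) = g2 := by
      simp only [gapz]
      rw [show ((g1 + g2 : ℤ) : ZMod n) - ((g1 : ℤ) : ZMod n) = ((g2 : ℤ) : ZMod n) from by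
        push_cast; ring]
      exact val_of_bounds (by omega) hb2
    have e3 : gapz n ((g1 + g2 : ℤ) : ZMod n) (0 : ZMod n) = g3 := by
      simp only [gapz]
      rw [zero_sub, cast_neg_eq (a := g1 + g2) (b := g3) (by omega)]
      exact val_of_bounds (by omega) hb3
    rw [show psi n (g1, g2, g3)
        = ((0 : ZMod n), ((g1 : ℤ) : ZMod n), ((g1 + g2 : ℤ) : ZMod n)) from rfl, Phi]
    dsimp only
    rw [e1, e2, e3, if_pos hs]
    exact sort3_of_sorted h12 h23

end phimem

lemma mem_sym3Invariants_iff {n : ℕ} (f : (ZMod n × ZMod n × ZMod n) → ℂ) :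
    f ∈ sym3Invariants n ↔
      (∀ x y z : ZMod n, f (y, x, z) = f (x, y, z)) ∧
      (∀ x y z : ZMod n, f (x, z, y) = f (x, y, z)) ∧
      (∀ k x y z : ZMod n, f (x + k, y + k, z + k) = f (x, y, z)) ∧
      (∀ x y z : ZMod n, f (-x, -y, -z) = f (x, y, z)) := by
  simp only [sym3Invariants, Submodule.mem_inf, LinearMap.mem_ker, Submodule.mem_iInf,
    LinearMap.sub_apply, LinearMap.funLeft_apply, LinearMap.id_apply, sub_eq_zero,
    funext_iff, Prod.forall]
  tauto

/-- For `π = ℤ/n`, the dimension of the `(π × π) ⋊ ℤ₂`-invariant part of `Sym³ ℂ[π]`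
equals `p₃(n)`. -/
theorem finrank_sym3_invariants (n : ℕ) (hn : 0 < n) :
    Module.finrank ℂ (sym3Invariants n) = p3 (n : ℤ) := by
  haveI : NeZero n := ⟨hn.ne'⟩
  set S : Set (ℤ × ℤ × ℤ) :=
    {t : ℤ × ℤ × ℤ | 0 ≤ t.1 ∧ t.1 ≤ t.2.1 ∧ t.2.1 ≤ t.2.2 ∧ t.1 + t.2.1 + t.2.2 = (n:ℤ)}
    with hS
  have hfin : S.Finite := by
    apply Set.Finite.subset
      (((Set.finite_Icc (0:ℤ) (n:ℤ)).prod
        ((Set.finite_Icc (0:ℤ) (n:ℤ)).prod (Set.finite_Icc (0:ℤ) (n:ℤ)))))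
    rintro ⟨a, b, c⟩ ⟨ha, hab, hbc, habc⟩
    simp only [Set.mem_prod, Set.mem_Icc]
    dsimp only at ha hab hbc habc
    refine ⟨⟨?_, ?_⟩, ⟨?_, ?_⟩, ⟨?_, ?_⟩⟩ <;> omega
  haveI : Fintype S := hfin.fintype
  have hmem : ∀ t : ZMod n × ZMod n × ZMod n, Phi n t ∈ S := fun t => Phi_mem t
  let E : (sym3Invariants n) ≃ₗ[ℂ] (S → ℂ) :=
    { toFun := fun f p => f.1 (psi n p.1)
      map_add' := fun f g => rfl
      map_smul' := fun c f => rfl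
      invFun := fun h => ⟨fun t => h ⟨Phi n t, hmem t⟩, by
        rw [mem_sym3Invariants_iff]
        refine ⟨fun x y z => ?_, fun x y z => ?_, fun k x y z => ?_, fun x y z => ?_⟩
        · exact congrArg h (Subtype.ext (Phi_swap1 x y z))
        · exact congrArg h (Subtype.ext (Phi_swap2 x y z))
        · exact congrArg h (Subtype.ext (Phi_translate x y z k))
        · exact congrArg h (Subtype.ext (Phi_neg x y z))⟩
      left_inv := by
        rintro ⟨f, hf⟩
        obtain ⟨hf1, hf2, hf3, hf4⟩ := (mem_sym3Invariants_iff f).mp hf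
        apply Subtype.ext
        funext t
        obtain ⟨x, y, z⟩ := t
        exact f_eq_psi_Phi hf1 hf2 hf3 hf4 x y z
      right_inv := by
        intro h
        funext p
        obtain ⟨⟨g1, g2, g3⟩, hp⟩ := p
        obtain ⟨hp0, hp12, hp23, hps⟩ := hp
        exact congrArg h (Subtype.ext (Phi_psi hp0 hp12 hp23 hps)) }
  rw [E.finrank_eq, Module.finrank_fintype_fun_eq_card, p3]
  rw [← Nat.card_coe_set_eq, Nat.card_eq_fintype_card]
end

section
/- Let π = ℤ/n. The dimension of the subspace of (Λ³ ℂ[π]) invariant under the action of (π × π) ⋊ ℤ₂ equals p₃(n − 6), the number of partitions of n − 6 into at most three parts (zero if n < 6). -/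
/- We model `Λ³ ℂ[π]` for `π = ℤ/n` as the space of antisymmetric functions `π³ → ℂ`
(`ℂ[π]` has basis `π`, and in characteristic zero `Λ³` is the space of antisymmetric
tensors).  The action of `(g,h) ∈ π × π` on a basis element `x` of `ℂ[π]` is
`g x h⁻¹ = x + (g - h)`, i.e. the diagonal action is simultaneous translation by an
arbitrary `k ∈ π`; the `ℤ₂`-involution negates all three group elements. -/

/-- The subspace of `Λ³ ℂ[ℤ/n]` invariant under `(π × π) ⋊ ℤ₂`: antisymmetric functions on
`(ℤ/n)³` invariant under simultaneous translation and under simultaneous negation. -/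
noncomputable def lambda3Invariants (n : ℕ) : Submodule ℂ ((ZMod n × ZMod n × ZMod n) → ℂ) :=
  (LinearMap.ker (LinearMap.funLeft ℂ ℂ
      (fun t : ZMod n × ZMod n × ZMod n => (t.2.1, t.1, t.2.2)) + LinearMap.id)) ⊓
  (LinearMap.ker (LinearMap.funLeft ℂ ℂ
      (fun t : ZMod n × ZMod n × ZMod n => (t.1, t.2.2, t.2.1)) + LinearMap.id)) ⊓
  (⨅ k : ZMod n, LinearMap.ker (LinearMap.funLeft ℂ ℂ
      (fun t : ZMod n × ZMod n × ZMod n => (t.1 + k, t.2.1 + k, t.2.2 + k)) - LinearMap.id)) ⊓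
  (LinearMap.ker (LinearMap.funLeft ℂ ℂ
      (fun t : ZMod n × ZMod n × ZMod n => (-t.1, -t.2.1, -t.2.2)) - LinearMap.id))

def partitionTriples (m : ℤ) : Set (ℤ × ℤ × ℤ) :=
  {t | 0 ≤ t.1 ∧ t.1 ≤ t.2.1 ∧ t.2.1 ≤ t.2.2 ∧ t.1 + t.2.1 + t.2.2 = m}

theorem p3_eq_ncard (m : ℤ) : p3 m = (partitionTriples m).ncard := rfl

theorem partitionTriples_finite (m : ℤ) : (partitionTriples m).Finite := by
  refine ((Set.finite_Icc 0 m).prod ((Set.finite_Icc 0 m).prod (Set.finite_Icc 0 m))).subset ?_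
  rintro ⟨x, y, z⟩ ⟨h₁, h₂, h₃, h₄⟩
  dsimp only at h₁ h₂ h₃ h₄
  simp only [Set.mem_prod, Set.mem_Icc]
  omega

/-- The triple `(0, u, u + v)` with cyclic gaps `u = t.1 + 1`, `v = t.2.1 + 2`, `t.2.2 + 3`,
which for `t ∈ partitionTriples (n - 6)` are distinct, increasing and sum to `n`. -/
def partitionPoint (n : ℕ) (t : ℤ × ℤ × ℤ) : ZMod n × ZMod n × ZMod n :=
  (0, ((t.1 + 1 : ℤ) : ZMod n), ((t.1 + t.2.1 + 3 : ℤ) : ZMod n))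

theorem eq_zero_of_forall_sorted {M : Type*} [AddCommGroup M] {n : ℕ} {g : ℕ → ℕ → M}
    (rotate : ∀ u v w, u + v + w = n → g u v = g v w) (swap : ∀ u v, g u v = -g v u)
    (sorted : ∀ u v w, u + v + w = n → u ≤ v → v ≤ w → g u v = 0)
    {u v w : ℕ} (h : u + v + w = n) : g u v = 0 := by
  rcases le_total u v with huv | hvu
  · rcases le_total v w with hvw | hwv
    · exact sorted u v w h huv hvw
    rcases le_total u w with huw | hwu
    · rw [swap, rotate v u w (by omega), sorted u w v (by omega) huw hwv, neg_zero]
    · rw [rotate u v w h, rotate v w u (by omega), sorted w u v (by omega) hwu huv]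
  · rcases le_total v w with hvw | hwv
    · rcases le_total u w with huw | hwu
      · rw [swap, sorted v u w (by omega) hvu huw, neg_zero]
      · rw [rotate u v w h, sorted v w u (by omega) hvw hwu]
    · rw [rotate u v w h, swap, sorted w v u (by omega) hwv hvu, neg_zero]

variable {n : ℕ} {f : ZMod n × ZMod n × ZMod n → ℂ}

theorem mem_lambda3Invariants :
    f ∈ lambda3Invariants n ↔
      (∀ a b c, f (b, a, c) = -f (a, b, c)) ∧ (∀ a b c, f (a, c, b) = -f (a, b, c)) ∧
      (∀ k a b c, f (a + k, b + k, c + k) = f (a, b, c)) ∧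
      (∀ a b c, f (-a, -b, -c) = f (a, b, c)) := by
  simp only [lambda3Invariants, Submodule.mem_inf, Submodule.mem_iInf, LinearMap.mem_ker,
    LinearMap.add_apply, LinearMap.sub_apply, LinearMap.funLeft_apply, LinearMap.id_apply,
    funext_iff, Pi.neg_apply, add_eq_zero_iff_eq_neg, sub_eq_zero, Prod.forall, and_assoc]

namespace lambda3Invariants

variable (hf : f ∈ lambda3Invariants n)
include hf

theorem apply_swap₁₂ (a b c : ZMod n) : f (b, a, c) = -f (a, b, c) :=
  (mem_lambda3Invariants.1 hf).1 a b c

theorem apply_swap₂₃ (a b c : ZMod n) : f (a, c, b) = -f (a, b, c) :=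
  (mem_lambda3Invariants.1 hf).2.1 a b c

theorem apply_add (k a b c : ZMod n) : f (a + k, b + k, c + k) = f (a, b, c) :=
  (mem_lambda3Invariants.1 hf).2.2.1 k a b c

theorem apply_neg (a b c : ZMod n) : f (-a, -b, -c) = f (a, b, c) :=
  (mem_lambda3Invariants.1 hf).2.2.2 a b c

theorem apply_swap₁₃ (a b c : ZMod n) : f (c, b, a) = -f (a, b, c) := by
  rw [apply_swap₁₂ hf, apply_swap₂₃ hf, apply_swap₁₂ hf, neg_neg]

theorem apply_rotate (a b c : ZMod n) : f (b, c, a) = f (a, b, c) := by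
  rw [apply_swap₂₃ hf, apply_swap₁₂ hf, neg_neg]

theorem apply_same₂₃ (a b : ZMod n) : f (a, b, b) = 0 :=
  CharZero.eq_neg_self_iff.1 (apply_swap₂₃ hf a b b)

theorem apply_eq_apply_sub (a b c : ZMod n) : f (a, b, c) = f (0, b - a, c - a) := by
  simpa [sub_eq_add_neg] using (apply_add hf (-a) a b c).symm

theorem apply_gaps_rotate {u v w : ℕ} (h : u + v + w = n) :
    f (0, u, ↑(u + v)) = f (0, v, ↑(v + w)) := by
  have hw : ((v + w : ℕ) : ZMod n) = -u := by
    rw [eq_neg_iff_add_eq_zero, ← Nat.cast_add, show v + w + u = n by omega, ZMod.natCast_self]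
  rw [hw, ← apply_rotate hf, apply_eq_apply_sub hf]
  push_cast
  ring_nf

theorem apply_gaps_swap (u v : ℕ) : f (0, u, ↑(u + v)) = -f (0, v, ↑(v + u)) := by
  rw [← apply_swap₁₃ hf, apply_eq_apply_sub hf _ _ 0, ← apply_neg hf]
  push_cast
  ring_nf

theorem apply_gaps_eq_zero [NeZero n]
    (h : ∀ t ∈ partitionTriples ((n : ℤ) - 6), f (partitionPoint n t) = 0)
    {u v w : ℕ} (hsum : u + v + w = n) : f (0, u, ↑(u + v)) = 0 := by
  refine eq_zero_of_forall_sorted (fun _ _ _ => apply_gaps_rotate hf) (apply_gaps_swap hf) ?_ hsum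
  intro u v w hsum huv hvw
  rcases Nat.eq_zero_or_pos u with rfl | hu
  · rw [Nat.cast_zero, zero_add, apply_rotate hf (v : ZMod n)]
    exact apply_same₂₃ hf _ _
  rcases huv.eq_or_lt with rfl | huv
  · exact CharZero.eq_neg_self_iff.1 (apply_gaps_swap hf u u)
  rcases hvw.eq_or_lt with rfl | hvw
  · rw [apply_gaps_rotate hf hsum]
    exact CharZero.eq_neg_self_iff.1 (apply_gaps_swap hf v v)
  have hmem : ((u : ℤ) - 1, (v : ℤ) - 2, (w : ℤ) - 3) ∈ partitionTriples ((n : ℤ) - 6) := by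
    simp only [partitionTriples, Set.mem_ofPred_eq]
    omega
  convert h _ hmem using 2
  simp only [partitionPoint]
  push_cast
  ring_nf

theorem eq_zero_of_apply_partitionPoint [NeZero n]
    (h : ∀ t ∈ partitionTriples ((n : ℤ) - 6), f (partitionPoint n t) = 0) : f = 0 := by
  have lt : ∀ {p q : ℕ}, p < q → q < n → f (0, p, q) = 0 := fun {p q} hpq hqn => by
    simpa [Nat.add_sub_cancel' hpq.le] using
      apply_gaps_eq_zero hf h (u := p) (v := q - p) (w := n - q) (by omega)
  funext ⟨a, b, c⟩
  rw [Pi.zero_apply, apply_eq_apply_sub hf, ← ZMod.natCast_zmod_val (b - a),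
    ← ZMod.natCast_zmod_val (c - a)]
  rcases lt_trichotomy (b - a).val (c - a).val with hbc | hbc | hbc
  · exact lt hbc (ZMod.val_lt _)
  · rw [hbc]
    exact apply_same₂₃ hf _ _
  · rw [← neg_eq_zero, ← apply_swap₂₃ hf]
    exact lt hbc (ZMod.val_lt _)

end lambda3Invariants

def antisymmetrize {α M : Type*} [AddCommGroup M] (ψ : α → α → α → M) (u v w : α) : M :=
  ψ u v w - ψ v u w - ψ u w v - ψ w v u + ψ v w u + ψ w u v

/-- Reversing the cyclic orientation of `(a, b, c)` negates its gaps, whence the second term. -/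
def ofGaps (ψ : ZMod n → ZMod n → ZMod n → ℂ) (t : ZMod n × ZMod n × ZMod n) : ℂ :=
  antisymmetrize ψ (t.2.1 - t.1) (t.2.2 - t.2.1) (t.1 - t.2.2) +
    antisymmetrize ψ (t.1 - t.2.1) (t.2.1 - t.2.2) (t.2.2 - t.1)

theorem ofGaps_mem_lambda3Invariants (ψ : ZMod n → ZMod n → ZMod n → ℂ) :
    ofGaps ψ ∈ lambda3Invariants n := by
  refine mem_lambda3Invariants.2 ⟨fun a b c => ?_, fun a b c => ?_, fun k a b c => ?_,
    fun a b c => ?_⟩ <;>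
  simp only [ofGaps, antisymmetrize, add_sub_add_right_eq_sub, neg_sub_neg] <;> abel

theorem ofGaps_zero_add {ψ : ZMod n → ZMod n → ZMod n → ℂ} {u v w : ZMod n} (h : u + v + w = 0) :
    ofGaps ψ (0, u, u + v) = antisymmetrize ψ u v w + antisymmetrize ψ (-u) (-v) (-w) := by
  obtain rfl : w = -(u + v) := eq_neg_of_add_eq_zero_right h
  simp only [ofGaps]
  ring_nf

section gapLift

variable (φ : ℤ × ℤ × ℤ → ℂ)

def gapLift (u v w : ZMod n) : ℂ :=
  if u.val < v.val ∧ v.val < w.val ∧ u.val + v.val + w.val = n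
  then φ (u.val - 1, v.val - 2, w.val - 3) else 0

theorem gapLift_eq_zero {u v w : ZMod n}
    (h : ¬(u.val < v.val ∧ v.val < w.val ∧ u.val + v.val + w.val = n)) : gapLift φ u v w = 0 :=
  if_neg h

variable {φ}

theorem antisymmetrize_gapLift_of_lt {u v w : ZMod n} (huv : u.val < v.val) (hvw : v.val < w.val) :
    antisymmetrize (gapLift φ) u v w = gapLift φ u v w := by
  simp (disch := omega) only [antisymmetrize, gapLift_eq_zero]
  ring

theorem antisymmetrize_gapLift_neg [NeZero n] {u v w : ZMod n} (hu : u ≠ 0) (hv : v ≠ 0)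
    (hw : w ≠ 0) (hsum : u.val + v.val + w.val = n) :
    antisymmetrize (gapLift φ) (-u) (-v) (-w) = 0 := by
  have hn := NeZero.pos n
  have hvals : (-u).val + (-v).val + (-w).val = 2 * n := by
    rw [ZMod.neg_val, ZMod.neg_val, ZMod.neg_val, if_neg hu, if_neg hv, if_neg hw]
    omega
  simp (disch := omega) only [antisymmetrize, gapLift_eq_zero]
  ring

theorem ofGaps_gapLift_partitionPoint [NeZero n] {t : ℤ × ℤ × ℤ}
    (ht : t ∈ partitionTriples ((n : ℤ) - 6)) : ofGaps (gapLift φ) (partitionPoint n t) = φ t := by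
  obtain ⟨x, y, z⟩ := t
  obtain ⟨hx, hxy, hyz, hsum⟩ := ht
  dsimp only at hx hxy hyz hsum
  have val_cast (a : ℤ) (h₀ : 0 ≤ a) (h₁ : a < n) : ((a : ZMod n).val : ℤ) = a := by
    rw [ZMod.val_intCast, Int.emod_eq_of_lt h₀ h₁]
  set u : ZMod n := ((x + 1 : ℤ) : ZMod n)
  set v : ZMod n := ((y + 2 : ℤ) : ZMod n)
  set w : ZMod n := ((z + 3 : ℤ) : ZMod n)
  have hu : (u.val : ℤ) = x + 1 := val_cast _ (by omega) (by omega)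
  have hv : (v.val : ℤ) = y + 2 := val_cast _ (by omega) (by omega)
  have hw : (w.val : ℤ) = z + 3 := val_cast _ (by omega) (by omega)
  have hpoint : partitionPoint n (x, y, z) = (0, u, u + v) := by
    simp only [partitionPoint, u, v]
    push_cast
    ring_nf
  have hzero : u + v + w = 0 := by
    simp only [u, v, w]
    rw [← Int.cast_add, ← Int.cast_add, show x + 1 + (y + 2) + (z + 3) = (n : ℤ) by omega,
      Int.cast_natCast, ZMod.natCast_self]
  have hne (a : ZMod n) (ha : (a.val : ℤ) ≠ 0) : a ≠ 0 := fun h => ha (by simp [h])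
  rw [hpoint, ofGaps_zero_add hzero, antisymmetrize_gapLift_of_lt (by omega) (by omega),
    antisymmetrize_gapLift_neg (hne u (by omega)) (hne v (by omega)) (hne w (by omega)) (by omega),
    add_zero, gapLift, if_pos (by omega), hu, hv, hw]
  simp only [add_sub_cancel_right]

end gapLift

noncomputable def evalPartitionPoints (n : ℕ) :
    lambda3Invariants n →ₗ[ℂ] (partitionTriples ((n : ℤ) - 6) → ℂ) :=
  LinearMap.funLeft ℂ ℂ (fun t => partitionPoint n t.1) ∘ₗ (lambda3Invariants n).subtype

theorem evalPartitionPoints_bijective [NeZero n] :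
    Function.Bijective (evalPartitionPoints n) := by
  refine ⟨(injective_iff_map_eq_zero _).2 fun f hf => ?_, fun φ => ?_⟩
  · exact Subtype.ext <|
      lambda3Invariants.eq_zero_of_apply_partitionPoint f.2 fun t ht => congrFun hf ⟨t, ht⟩
  · refine ⟨⟨ofGaps (gapLift (Function.extend Subtype.val φ 0)), ofGaps_mem_lambda3Invariants _⟩,
      funext fun t => ?_⟩
    simp only [evalPartitionPoints, LinearMap.coe_comp, Function.comp_apply,
      Submodule.coe_subtype, LinearMap.funLeft_apply]
    rw [ofGaps_gapLift_partitionPoint t.2, Subtype.val_injective.extend_apply]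

/-- For `π = ℤ/n`, the dimension of the `(π × π) ⋊ ℤ₂`-invariant part of `Λ³ ℂ[π]`
equals `p₃(n − 6)` (which is zero if `n < 6`). -/
theorem finrank_lambda3_invariants (n : ℕ) (hn : 0 < n) :
    Module.finrank ℂ (lambda3Invariants n) = p3 ((n : ℤ) - 6) := by
  have : NeZero n := ⟨hn.ne'⟩
  have := (partitionTriples_finite ((n : ℤ) - 6)).fintype
  rw [(LinearEquiv.ofBijective _ evalPartitionPoints_bijective).finrank_eq,
    Module.finrank_fintype_fun_eq_card, ← Nat.card_eq_fintype_card, Nat.card_coe_set_eq,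
    p3_eq_ncard]
end
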